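/- Assume a model of 3-process read-write consensus algorithms in which: (a) the initial configuration with inputs (0,1,1) is 1-valent (Lemma: validity plus COF termination for {p1,p2}-solo runs forces decision 1); (b) there is a reachable bivalent configuration; (c) every bivalent configuration has a {p1,p2}-step to a bivalent configuration; and (d) COF termination requires that in every infinite execution whose suffix contains only steps of p1 and p2 (which propose the same value), both p1 and p2 decide. Then no such algorithm exists: the assumptions (b), (c), (d) together with 'bivalent configurations are undecided' are contradictory. -/

import Mathlib

inductive Proc3 | p0 | p1 | p2
deriving DecidableEq

/-- Reachability via steps of arbitrary processes. -/
def ReachAny {Conf : Type*} (Step : Proc3 → Conf → Conf → Prop) : Conf → Conf → Prop :=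
  Relation.ReflTransGen (fun C C' => ∃ p, Step p C C')

theorem exists_seq_rel_of_forall_exists_rel {α : Type*} {P : α → Prop} {R : α → α → Prop}
    (h : ∀ a, P a → ∃ b, R a b ∧ P b) {a : α} (ha : P a) :
    ∃ f : ℕ → α, f 0 = a ∧ ∀ n, P (f n) ∧ R (f n) (f (n + 1)) := by
  choose next hnext using fun x : Subtype P => h x.1 x.2
  let g : Subtype P → Subtype P := fun x => ⟨next x, (hnext x).2⟩
  refine ⟨fun n => (g^[n] ⟨a, ha⟩).1, rfl, fun n => ⟨(g^[n] ⟨a, ha⟩).2, ?_⟩⟩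
  simp only [Function.iterate_succ_apply']
  exact (hnext _).1

theorem no_cof_consensus_general {Conf : Type*}
    (Step : Proc3 → Conf → Conf → Prop)
    (bivalent : Conf → Prop) (deciding : Bool → Conf → Prop)
    (hundec : ∀ C v, bivalent C → ¬ deciding v C)
    (B : Conf) (hB : bivalent B)
    (hext : ∀ C, bivalent C →
      ∃ p, (p = Proc3.p1 ∨ p = Proc3.p2) ∧ ∃ C', Step p C C' ∧ bivalent C')
    (hterm : ∀ f : ℕ → Conf, f 0 = B →
      (∀ n, ∃ p, (p = Proc3.p1 ∨ p = Proc3.p2) ∧ Step p (f n) (f (n + 1))) →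
      ∃ n v, deciding v (f n)) :
    False := by
  have hext' : ∀ C, bivalent C →
      ∃ C', (∃ p, (p = Proc3.p1 ∨ p = Proc3.p2) ∧ Step p C C') ∧ bivalent C' := by
    intro C hC
    obtain ⟨p, hp, C', hstep, hC'⟩ := hext C hC
    exact ⟨C', ⟨p, hp, hstep⟩, hC'⟩
  obtain ⟨f, hf0, hf⟩ := exists_seq_rel_of_forall_exists_rel hext' hB
  obtain ⟨n, v, hdec⟩ := hterm f hf0 fun n => (hf n).2
  exact hundec (f n) v (hf n).1 hdec

/-- Impossibility of conflict-obstruction-free consensus for three processes in the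
read-write model: the hypotheses
(b) a bivalent configuration `B` is reachable from the initial configuration `I`;
(c) every bivalent configuration has a step by `p1` or `p2` to a bivalent configuration;
(d) COF termination: in every infinite execution from `B` consisting only of steps of
    `p1` and `p2` (which propose the same value), some configuration is deciding;
together with the fact that bivalent configurations are undecided, are contradictory. -/
theorem no_cof_consensus {Conf : Type*}
    (Step : Proc3 → Conf → Conf → Prop)
    (bivalent : Conf → Prop) (deciding : Bool → Conf → Prop)
    (hundec : ∀ C v, bivalent C → ¬ deciding v C)
    (I B : Conf) (hreach : ReachAny Step I B) (hB : bivalent B)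
    (hext : ∀ C, bivalent C →
      ∃ p, (p = Proc3.p1 ∨ p = Proc3.p2) ∧ ∃ C', Step p C C' ∧ bivalent C')
    (hterm : ∀ f : ℕ → Conf, f 0 = B →
      (∀ n, ∃ p, (p = Proc3.p1 ∨ p = Proc3.p2) ∧ Step p (f n) (f (n + 1))) →
      ∃ n v, deciding v (f n)) :
    False :=
  no_cof_consensus_general Step bivalent deciding hundec B hB hext hterm
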